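/- Let u : Ω → ℝ³ be C² and A : Ω → so(3) be C¹ on a connected open set Ω ⊆ ℝ³. If Du = A everywhere on Ω, then Curl A = 0 on Ω, A is constant, and D(axl A) = 0. (Redundancy of the linear Cosserat model: vanishing of the strain e = Du − A forces the curvature 𝔎 = D axl A to vanish.) -/

import Mathlib

open Matrix BigOperators

noncomputable section

abbrev V3 := Fin 3 → ℝ
abbrev M3 := Matrix (Fin 3) (Fin 3) ℝ

/-- axial vector of a 3×3 matrix (intended for skew-symmetric matrices) -/
def axl (A : M3) : V3 := ![A 2 1, A 0 2, A 1 0]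

/-- the skew-symmetric matrix with given axial vector -/
def antiM (v : V3) : M3 := !![0, -v 2, v 1; v 2, 0, -v 0; -v 1, v 0, 0]

def symM (X : M3) : M3 := (1/2 : ℝ) • (X + Xᵀ)
def skwM (X : M3) : M3 := (1/2 : ℝ) • (X - Xᵀ)
def devM (X : M3) : M3 := X - ((Matrix.trace X)/3) • (1 : M3)

/-- squared Frobenius norm -/
def frob2 (X : M3) : ℝ := ∑ i, ∑ j, (X i j)^2
/-- Frobenius inner product ⟨X,Y⟩ = tr(XYᵀ) -/
def finner (X Y : M3) : ℝ := ∑ i, ∑ j, X i j * Y i j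
/-- squared Euclidean norm of a vector -/
def norm2v (v : V3) : ℝ := ∑ i, (v i)^2

/-- partial derivative ∂ᵢ f -/
def pd (i : Fin 3) (f : V3 → ℝ) (x : V3) : ℝ := fderiv ℝ f x (Pi.single i 1)

/-- Jacobian matrix (D u)_{ij} = ∂_j u_i -/
def jac (u : V3 → V3) (x : V3) : M3 := Matrix.of fun i j => pd j (fun y => u y i) x

/-- curl of a vector field -/
def curlV (u : V3 → V3) (x : V3) : V3 :=
  ![pd 1 (fun y => u y 2) x - pd 2 (fun y => u y 1) x,
    pd 2 (fun y => u y 0) x - pd 0 (fun y => u y 2) x,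
    pd 0 (fun y => u y 1) x - pd 1 (fun y => u y 0) x]

/-- row-wise matrix Curl : (Curl P)_{ij} = ε_{jmn} ∂_m P_{in} -/
def curlM (P : V3 → M3) (x : V3) : M3 := Matrix.of fun i => curlV (fun y => P y i) x

/-- Levi-Civita symbol on Fin 3 -/
def lc (i j k : Fin 3) : ℝ :=
  ((j.val : ℝ) - (i.val : ℝ)) * ((k.val : ℝ) - (j.val : ℝ)) * ((k.val : ℝ) - (i.val : ℝ)) / 2

/-!
Near each point of `Ω` we have `A = Du`, so `∂ₘAᵢⱼ = ∂ₘ∂ⱼuᵢ` is symmetric in `(j, m)` by Schwarz,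
while skewness of `A` makes it antisymmetric in `(i, j)`; a three-index array with both symmetries
vanishes. Thus every first partial of `A` vanishes on `Ω`: this kills `Curl A` and `D axl A`
pointwise, and makes `A` constant on the connected open set `Ω`.
-/

open Filter Topology

lemma eq_zero_of_symm_of_antisymm {ι G : Type*} [AddGroup G] [IsAddTorsionFree G]
    {T : ι → ι → ι → G} (hsymm : ∀ i j m, T i j m = T i m j)
    (hanti : ∀ i j m, T i j m = -T j i m) (i j m : ι) : T i j m = 0 :=
  self_eq_neg.mp <| calc
    T i j m = -T m i j := by rw [hsymm, hanti]
    _ = -T m j i := by rw [hsymm m i j]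
    _ = T j m i := by rw [hanti m j i, neg_neg]
    _ = T j i m := hsymm j m i
    _ = -T i j m := hanti j i m

lemma pd_congr_of_eventuallyEq {f g : V3 → ℝ} {x : V3} (h : f =ᶠ[𝓝 x] g) (i : Fin 3) :
    pd i f x = pd i g x := by
  rw [pd, pd, h.fderiv_eq]

lemma pd_neg (i : Fin 3) (f : V3 → ℝ) (x : V3) : pd i (fun y => -f y) x = -pd i f x := by
  simp [pd, fderiv_fun_neg]

lemma pd_pd_comm {f : V3 → ℝ} {x : V3} (hf : ContDiffAt ℝ 2 f x) (i j : Fin 3) :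
    pd i (pd j f) x = pd j (pd i f) x := by
  have hd : DifferentiableAt ℝ (fderiv ℝ f) x :=
    (hf.fderiv_right (m := 1) le_rfl).differentiableAt one_ne_zero
  have fderiv_pd : ∀ k l,
      pd k (pd l f) x = fderiv ℝ (fderiv ℝ f) x (Pi.single k 1) (Pi.single l 1) := by
    intro k l
    change fderiv ℝ (fun y => fderiv ℝ f y (Pi.single l 1)) x (Pi.single k 1) = _
    rw [fderiv_clm_apply hd (differentiableAt_const _)]
    simp
  rw [fderiv_pd, fderiv_pd]
  exact hf.isSymmSndFDerivAt (by simp) _ _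

lemma fderiv_eq_zero_of_forall_pd_eq_zero {f : V3 → ℝ} {x : V3} (h : ∀ i, pd i f x = 0) :
    fderiv ℝ f x = 0 :=
  ContinuousLinearMap.coe_injective <| LinearMap.pi_ext fun i c => by
    have hc : (Pi.single i c : V3) = c • Pi.single i 1 := by simp [← Pi.single_smul]
    rw [ContinuousLinearMap.coe_coe, hc, map_smul]
    exact smul_eq_zero_of_right c (h i)

lemma pd_entry_eq_zero_of_jac_eq_skew {u : V3 → V3} {A : V3 → M3} {x : V3}
    (hu : ContDiffAt ℝ 2 u x) (hskew : ∀ᶠ y in 𝓝 x, (A y)ᵀ = -A y)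
    (heq : ∀ᶠ y in 𝓝 x, jac u y = A y) (i j m : Fin 3) :
    pd m (fun y => A y i j) x = 0 := by
  refine eq_zero_of_symm_of_antisymm (T := fun i j m => pd m (fun y => A y i j) x) ?_ ?_ i j m
  · intro i j m
    have hA : ∀ k, (fun y => A y i k) =ᶠ[𝓝 x] pd k (fun y => u y i) := fun k =>
      heq.mono fun y hy => (congrFun (congrFun hy i) k).symm
    simp only [pd_congr_of_eventuallyEq (hA _)]
    exact pd_pd_comm (contDiffAt_pi.1 hu i) m j
  · intro i j m
    have hA : (fun y => A y i j) =ᶠ[𝓝 x] fun y => -A y j i :=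
      hskew.mono fun y hy => by simpa using congrFun (congrFun hy j) i
    simp only [pd_congr_of_eventuallyEq hA, pd_neg]

lemma curlM_eq_zero_of_pd_eq_zero {P : V3 → M3} {x : V3}
    (h : ∀ i j m, pd m (fun y => P y i j) x = 0) : curlM P x = 0 := by
  ext i j
  fin_cases j <;> simp [curlM, curlV, h]

lemma jac_axl_eq_zero_of_pd_eq_zero {P : V3 → M3} {x : V3}
    (h : ∀ i j m, pd m (fun y => P y i j) x = 0) : jac (fun y => axl (P y)) x = 0 := by
  ext i j
  fin_cases i
  exacts [h 2 1 j, h 0 2 j, h 1 0 j]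

theorem cosserat_redundancy (Ω : Set V3) (hopen : IsOpen Ω) (hconn : IsConnected Ω)
    (u : V3 → V3) (A : V3 → M3)
    (hu : ContDiffOn ℝ 2 u Ω)
    (hA : ∀ i j, ContDiffOn ℝ 1 (fun x => A x i j) Ω)
    (hskew : ∀ x ∈ Ω, (A x)ᵀ = -(A x))
    (heq : ∀ x ∈ Ω, jac u x = A x) :
    (∀ x ∈ Ω, curlM A x = 0) ∧
    (∀ x ∈ Ω, ∀ y ∈ Ω, A x = A y) ∧
    (∀ x ∈ Ω, jac (fun y => axl (A y)) x = 0) := by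
  have hpd : ∀ x ∈ Ω, ∀ i j m, pd m (fun y => A y i j) x = 0 := fun x hx =>
    have hΩ : Ω ∈ 𝓝 x := hopen.mem_nhds hx
    pd_entry_eq_zero_of_jac_eq_skew (hu.contDiffAt hΩ) (eventually_of_mem hΩ hskew)
      (eventually_of_mem hΩ heq)
  refine ⟨fun x hx => curlM_eq_zero_of_pd_eq_zero (hpd x hx), ?_,
    fun x hx => jac_axl_eq_zero_of_pd_eq_zero (hpd x hx)⟩
  intro x hx y hy
  ext i j
  exact hopen.is_const_of_fderiv_eq_zero hconn.isPreconnected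
    ((hA i j).differentiableOn one_ne_zero)
    (fun z hz => fderiv_eq_zero_of_forall_pd_eq_zero (hpd z hz i j)) hx hy
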